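/- For each i ∈ I, the linear map θ_i : g* → g* is a twisted derivation with respect to the shuffle product: for all words 𝐣₁, 𝐣₂ over I, θ_i(𝐣₁ ∘ 𝐣₂) = v^{(α_i,|𝐣₂|)} · θ_i(𝐣₁) ∘ 𝐣₂ + 𝐣₁ ∘ θ_i(𝐣₂), where (α_i,|𝐣₂|) := Σ_ℓ (α_i, α_{(𝐣₂)_ℓ}) and v^{(α_i,|𝐣₂|)} := u^{2(α_i,|𝐣₂|)}. -/

import Mathlib

/-- `σ` is a shuffle of the blocks `{0,…,r-1}` and `{r,…,n-1}` of `Fin n`: the positions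
`σ⁻¹` of the letters of each block are increasing.  (This is the set `Σ_{r,n-r}`.) -/
def isShuffle (n r : ℕ) (σ : Equiv.Perm (Fin n)) : Prop :=
  ∀ k l : Fin n, k < l → ((l : ℕ) < r ∨ r ≤ (k : ℕ)) → σ⁻¹ k < σ⁻¹ l

open Classical in
/-- The finite set `Σ_{r,n-r}` of shuffles of `Fin n` with block boundary `r`. -/
noncomputable def shuffles (n r : ℕ) : Finset (Equiv.Perm (Fin n)) :=
  Finset.univ.filter fun σ => isShuffle n r σ

/-- Twice the exponent `ζ(σ)`: the sum over pairs `(k,l)` with `k` in the first block and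
`l` in the second block of `±(α_{j_k}, α_{j_l})`, the sign recording whether the pair is
inverted by `σ` (i.e. `σ⁻¹(l) < σ⁻¹(k)`) or not. -/
def twoZeta {I : Type*} (n r : ℕ) (B : I → I → ℤ) (j : Fin n → I)
    (σ : Equiv.Perm (Fin n)) : ℤ :=
  ∑ k : Fin n, ∑ l : Fin n,
    if (k : ℕ) < r ∧ r ≤ (l : ℕ) then
      if σ⁻¹ l < σ⁻¹ k then B (j k) (j l) else -B (j k) (j l)
    else 0

/-- The word `𝐣_σ = (j_{σ(1)},…,j_{σ(n)})` obtained by permuting the word `w` by `σ`. -/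
def wordPerm {I : Type*} (w : List I) (σ : Equiv.Perm (Fin w.length)) : List I :=
  List.ofFn fun m => w.get (σ m)

/-- The shuffle product of two basis words in the quantum shuffle algebra
`g* = (List I) →₀ R`:  `𝐚 ∘ 𝐛 = ∑_{σ ∈ Σ_{r,s}} v^{ζ(σ)} (𝐚𝐛)_σ` where `r, s` are the
lengths of `𝐚, 𝐛` and `v^{ζ(σ)} = u^{2ζ(σ)}`. -/
noncomputable def shMulWord {I : Type*} {R : Type*} [CommRing R] (B : I → I → ℤ) (u : Rˣ)
    (a b : List I) : List I →₀ R :=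
  ∑ σ ∈ shuffles (a ++ b).length a.length,
    Finsupp.single (wordPerm (a ++ b) σ)
      ((u ^ twoZeta (a ++ b).length a.length B (a ++ b).get σ : Rˣ) : R)

/-- The shuffle product on the quantum shuffle algebra `g* = (List I) →₀ R`, extended
bilinearly from basis words. -/
noncomputable def shMul {I : Type*} {R : Type*} [CommRing R] (B : I → I → ℤ) (u : Rˣ)
    (x y : List I →₀ R) : List I →₀ R :=
  x.sum fun a ra => y.sum fun b rb => (ra * rb) • shMulWord B u a b

/-- The pairing `(|𝐚|,|𝐛|) = ∑_{k,l} (α_{a_k}, α_{b_l})` of the degrees of two words. -/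
def pairWt {I : Type*} (B : I → I → ℤ) (a b : List I) : ℤ :=
  (a.map fun i => (b.map fun i' => B i i').sum).sum

open Classical in
/-- The value of the twisted derivation `θ_i` on a basis word:
`θ_i(𝐣) = v^{(1/2)(|𝐣|-α_i, α_i)} (j_1,…,j_{r-1})` if `j_r = i`, and `0` otherwise. -/
noncomputable def thetaWord {I : Type*} {R : Type*} [CommRing R] (B : I → I → ℤ) (u : Rˣ)
    (i : I) (w : List I) : List I →₀ R :=
  if w.getLast? = some i then
    Finsupp.single w.dropLast ((u ^ pairWt B w.dropLast [i] : Rˣ) : R)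
  else 0

/-- The linear map `θ_i : g* → g*`, extended from basis words. -/
noncomputable def theta {I : Type*} {R : Type*} [CommRing R] (B : I → I → ℤ) (u : Rˣ)
    (i : I) (x : List I →₀ R) : List I →₀ R :=
  x.sum fun w c => c • thetaWord B u i w

/-!
Every shuffle of `a ++ [x]` and `b ++ [y]` ends either in `x` or in `y`, and deleting that last
letter leaves a shuffle of `a` with `b ++ [y]`, resp. of `a ++ [x]` with `b`. The inversions lost
in doing so are those of `x` with all of `b ++ [y]`, resp. of all of `a ++ [x]` with `y`, which
gives the recursion
`(a x) ∘ (b y) = u^{(x, |b y|)} (a ∘ b y) x + u^{-(|a x|, y)} (a x ∘ b) y`.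
The map `θ_i` kills the words not ending in `i` and strips the final `i` of the others with the
weight `u^{(|w|, α_i)}`, which is constant on `a ∘ b` because all its words are rearrangements of
`a ++ b`. Applying `θ_i` to the recursion and using the symmetry of `B` gives the twisted Leibniz
rule.
-/

open Finset

section Shuffles

variable {m n r : ℕ}

lemma mem_shuffles {σ : Equiv.Perm (Fin n)} : σ ∈ shuffles n r ↔ isShuffle n r σ := by
  classical
  simp [shuffles]

lemma shuffles_eq_singleton_one (h : r = 0 ∨ r = n) : shuffles n r = {1} := by
  ext σ
  rw [mem_shuffles, mem_singleton]
  refine ⟨fun hσ => ?_, fun hσ k l hkl _ => by simpa [hσ] using hkl⟩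
  have hmono : StrictMono ⇑σ⁻¹ := fun k l hkl => hσ k l hkl (by omega)
  rw [← inv_eq_one]
  exact Equiv.ext (congrFun hmono.eq_id)

lemma apply_last_of_isShuffle {p : ℕ} {σ : Equiv.Perm (Fin (m + 1))}
    (hσ : isShuffle (m + 1) (p + 1) σ) :
    (σ (Fin.last m) : ℕ) = p ∨ σ (Fin.last m) = Fin.last m := by
  by_contra! h
  have hlt : (σ (Fin.last m) : ℕ) < m := Fin.val_lt_last h.2
  have := hσ (σ (Fin.last m)) ⟨σ (Fin.last m) + 1, by omega⟩ (Fin.lt_def.2 (by simp))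
    (by simp; omega)
  rw [Equiv.Perm.coe_inv, Equiv.symm_apply_apply] at this
  exact (Fin.le_last _).not_gt this

end Shuffles

section SuccAbovePerm

variable {m : ℕ}

lemma Equiv.optionCongr_removeNone {α : Type*} {e : Equiv.Perm (Option α)} (h : e none = none) :
    (Equiv.removeNone e).optionCongr = e := by
  ext1 (_ | x)
  · simp [h]
  · obtain ⟨y, hy⟩ := Option.ne_none_iff_exists'.1 fun hx =>
      Option.some_ne_none x (e.injective (hx.trans h.symm))
    simp [Equiv.removeNone_some e ⟨y, hy⟩]

/-- The permutation sending `last m` to `t` and `castSucc y` to `t.succAbove (σ y)`. -/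
def succAbovePerm (t : Fin (m + 1)) (σ : Equiv.Perm (Fin m)) : Equiv.Perm (Fin (m + 1)) :=
  (finSuccEquiv' (Fin.last m)).trans (σ.optionCongr.trans (finSuccEquiv' t).symm)

variable (t : Fin (m + 1)) (σ : Equiv.Perm (Fin m))

@[simp] lemma succAbovePerm_last : succAbovePerm t σ (Fin.last m) = t := by
  simp [succAbovePerm]

@[simp] lemma succAbovePerm_castSucc (y : Fin m) :
    succAbovePerm t σ y.castSucc = t.succAbove (σ y) := by
  simp [succAbovePerm, ← Fin.succAbove_last]

@[simp] lemma succAbovePerm_inv_self : (succAbovePerm t σ)⁻¹ t = Fin.last m := by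
  rw [Equiv.Perm.inv_eq_iff_eq, succAbovePerm_last]

@[simp] lemma succAbovePerm_inv_succAbove (y : Fin m) :
    (succAbovePerm t σ)⁻¹ (t.succAbove y) = (σ⁻¹ y).castSucc := by
  rw [Equiv.Perm.inv_eq_iff_eq, succAbovePerm_castSucc, Equiv.Perm.coe_inv, Equiv.apply_symm_apply]

lemma succAbovePerm_injective : Function.Injective (succAbovePerm t) := fun σ τ h =>
  Equiv.ext fun y => Fin.succAbove_right_injective (p := t) <| by
    simpa using congrArg (· y.castSucc) h

lemma exists_succAbovePerm_eq (τ : Equiv.Perm (Fin (m + 1))) :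
    ∃ σ, succAbovePerm (τ (Fin.last m)) σ = τ := by
  set e := (finSuccEquiv' (Fin.last m)).symm.trans (τ.trans (finSuccEquiv' (τ (Fin.last m))))
  refine ⟨Equiv.removeNone e, ?_⟩
  rw [succAbovePerm, Equiv.optionCongr_removeNone (by simp [e])]
  ext1 x
  simp [e]

end SuccAbovePerm

section SplitShuffles

variable {m r r' : ℕ} {t : Fin (m + 1)}

/-- `hblock`: `t.succAbove` carries the blocks of `Fin m` onto those of `Fin (m + 1) \ {t}`;
`hlast`: `t` is the last letter of its block. -/
lemma isShuffle_succAbovePerm_iff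
    (hblock : ∀ y : Fin m, (t.succAbove y : ℕ) < r ↔ (y : ℕ) < r')
    (hlast : ∀ l : Fin (m + 1), t < l → ((t : ℕ) < r ↔ r ≤ (l : ℕ)))
    (σ : Equiv.Perm (Fin m)) :
    isShuffle (m + 1) r (succAbovePerm t σ) ↔ isShuffle m r' σ := by
  have hpair : ∀ a b : Fin m, ((t.succAbove b : ℕ) < r ∨ r ≤ (t.succAbove a : ℕ)) ↔
      ((b : ℕ) < r' ∨ r' ≤ (a : ℕ)) := fun a b => by
    rw [hblock b, ← not_lt, hblock a, not_lt]
  constructor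
  · intro hσ a b hab hab'
    simpa using hσ _ _ (Fin.succAbove_lt_succAbove_iff.2 hab) ((hpair a b).2 hab')
  · intro hσ k l hkl hkl'
    obtain rfl | ⟨a, rfl⟩ := Fin.eq_self_or_eq_succAbove t k
    · have := hlast l hkl
      omega
    obtain rfl | ⟨b, rfl⟩ := Fin.eq_self_or_eq_succAbove t l
    · simp
    · simpa using hσ a b (Fin.succAbove_lt_succAbove_iff.1 hkl) ((hpair a b).1 hkl')

lemma sum_shuffles_filter_apply_last_eq {M : Type*} [AddCommMonoid M]
    (hiff : ∀ σ, isShuffle (m + 1) r (succAbovePerm t σ) ↔ isShuffle m r' σ)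
    (F : Equiv.Perm (Fin (m + 1)) → M) :
    ∑ τ ∈ (shuffles (m + 1) r).filter (fun τ => τ (Fin.last m) = t), F τ
      = ∑ σ ∈ shuffles m r', F (succAbovePerm t σ) := by
  symm
  refine Finset.sum_nbij (succAbovePerm t) (fun σ hσ => ?_)
    (succAbovePerm_injective t).injOn (fun τ hτ => ?_) (fun _ _ => rfl)
  · rw [mem_filter, mem_shuffles, hiff, ← mem_shuffles]
    exact ⟨hσ, succAbovePerm_last t σ⟩
  · obtain ⟨hτ, rfl⟩ := mem_filter.1 (mem_coe.1 hτ)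
    obtain ⟨σ, hσ⟩ := exists_succAbovePerm_eq τ
    refine ⟨σ, ?_, hσ⟩
    rwa [mem_coe, mem_shuffles, ← hiff, hσ, ← mem_shuffles]

lemma val_succAbove_lt_succ_iff {y : Fin m} {k : ℕ} (ht : (t : ℕ) = k) :
    (t.succAbove y : ℕ) < k + 1 ↔ (y : ℕ) < k := by
  rw [Fin.succAbove]
  split_ifs with h <;> simp only [Fin.lt_def, Fin.val_castSucc, Fin.val_succ] at h ⊢ <;> omega

lemma sum_shuffles_succ {M : Type*} [AddCommMonoid M] {p : ℕ} (hp : p < m) (ht : (t : ℕ) = p)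
    (F : Equiv.Perm (Fin (m + 1)) → M) :
    ∑ τ ∈ shuffles (m + 1) (p + 1), F τ
      = ∑ σ ∈ shuffles m p, F (succAbovePerm t σ)
        + ∑ σ ∈ shuffles m (p + 1), F (succAbovePerm (Fin.last m) σ) := by
  rw [← sum_filter_add_sum_filter_not _ (fun τ => τ (Fin.last m) = t)]
  congr 1
  · refine sum_shuffles_filter_apply_last_eq
      (isShuffle_succAbovePerm_iff (fun y => val_succAbove_lt_succ_iff ht) fun l hl => ?_) F
    rw [Fin.lt_def] at hl
    omega
  · rw [← sum_shuffles_filter_apply_last_eq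
      (isShuffle_succAbovePerm_iff (r := p + 1) (r' := p + 1) (fun y => by simp)
        fun l hl => absurd (Fin.le_last l) (not_le.2 hl)) F]
    refine sum_congr (filter_congr fun τ hτ => ?_) fun _ _ => rfl
    have hne : t ≠ Fin.last m := fun h => by simp [h] at ht; omega
    rcases apply_last_of_isShuffle (mem_shuffles.1 hτ) with h | h
    · simp [Fin.ext_iff, h, ht, hp.ne]
    · simp [h, hne.symm]

end SplitShuffles

section TwoZeta

variable {I : Type*} (B : I → I → ℤ) {m r r' : ℕ} {t : Fin (m + 1)}

/-- Moving `t` to the last position inverts all its pairs with the second block when `t` lies in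
the first block, and none of its pairs with the first block when it lies in the second. -/
lemma twoZeta_succAbovePerm (hblock : ∀ y : Fin m, (t.succAbove y : ℕ) < r ↔ (y : ℕ) < r')
    (f : Fin (m + 1) → I) (σ : Equiv.Perm (Fin m)) :
    twoZeta (m + 1) r B f (succAbovePerm t σ)
      = twoZeta m r' B (fun y => f (t.succAbove y)) σ
        + ∑ l : Fin (m + 1), (if (t : ℕ) < r ∧ r ≤ (l : ℕ) then B (f t) (f l) else 0)
        - ∑ k : Fin (m + 1),
            (if (k : ℕ) < r ∧ r ≤ (t : ℕ) then B (f k) (f t) else 0) := by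
  have hle : ∀ y : Fin m, r ≤ (t.succAbove y : ℕ) ↔ r' ≤ (y : ℕ) := fun y => by
    rw [← not_lt, hblock, not_lt]
  have htt : ¬((t : ℕ) < r ∧ r ≤ (t : ℕ)) := by omega
  unfold twoZeta
  rw [Fin.sum_univ_succAbove _ t]
  simp only [Fin.sum_univ_succAbove _ t, succAbovePerm_inv_self, succAbovePerm_inv_succAbove,
    Fin.castSucc_lt_castSucc_iff, hblock, hle, htt, Fin.castSucc_lt_last, if_true,
    (Fin.castSucc_lt_last _).not_gt, if_false, zero_add, sum_add_distrib]
  rw [sub_eq_add_neg, ← sum_neg_distrib]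
  simp only [neg_ite, neg_zero]
  ring

end TwoZeta

section OfFn

variable {α : Type*}

lemma List.ofFn_comp_succAbove {n : ℕ} (f : Fin (n + 1) → α) (t : Fin (n + 1)) :
    List.ofFn (fun y => f (t.succAbove y)) = (List.ofFn f).eraseIdx t := by
  refine List.ext_getElem (by simp [List.length_eraseIdx, Fin.is_le]) fun k h₁ h₂ => ?_
  rw [List.getElem_eraseIdx, List.getElem_ofFn]
  split_ifs with hk <;> rw [List.getElem_ofFn] <;> congr 1 <;> ext <;>
    simp [Fin.succAbove, Fin.lt_def, hk]

lemma sum_ite_lt_length_of_ofFn_eq_append {M : Type*} [AddCommMonoid M] {n : ℕ} {f : Fin n → α}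
    {a c : List α} (h : List.ofFn f = a ++ c) (φ : α → M) :
    ∑ k : Fin n, (if (k : ℕ) < a.length then φ (f k) else 0) = (a.map φ).sum := by
  obtain rfl : n = a.length + c.length := by simpa using congrArg List.length h
  rw [List.ofFn_add] at h
  conv_rhs => rw [← (List.append_inj h (by simp)).1]
  simp [Fin.sum_univ_add, List.sum_ofFn]
  rfl

lemma sum_ite_length_le_of_ofFn_eq_append {M : Type*} [AddCommMonoid M] {n : ℕ}
    {f : Fin n → α} {a c : List α} (h : List.ofFn f = a ++ c) (φ : α → M) :
    ∑ k : Fin n, (if a.length ≤ (k : ℕ) then φ (f k) else 0) = (c.map φ).sum := by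
  obtain rfl : n = a.length + c.length := by simpa using congrArg List.length h
  rw [List.ofFn_add] at h
  conv_rhs => rw [← (List.append_inj h (by simp)).2]
  simp [Fin.sum_univ_add, List.sum_ofFn, fun i : Fin a.length => i.is_lt.not_ge]

end OfFn

section ShuffleProduct

variable {I R : Type*} [CommRing R] (B : I → I → ℤ) (u : Rˣ)

noncomputable def shuffleSum (n r : ℕ) (f : Fin n → I) : List I →₀ R :=
  ∑ σ ∈ shuffles n r,
    Finsupp.single (List.ofFn (f ∘ σ)) ((u ^ twoZeta n r B f σ : Rˣ) : R)

lemma shMulWord_eq_shuffleSum {n : ℕ} {f : Fin n → I} {a b : List I}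
    (h : List.ofFn f = a ++ b) : shMulWord B u a b = shuffleSum B u n a.length f := by
  obtain ⟨rfl, hf⟩ := Sigma.mk.inj_iff.1 (List.ofFn_inj'.1 (h.trans (List.ofFn_get _).symm))
  cases eq_of_heq hf
  rfl

lemma shuffleSum_of_trivial_block {n r : ℕ} (h : r = 0 ∨ r = n) (f : Fin n → I) :
    shuffleSum B u n r f = Finsupp.single (List.ofFn f) 1 := by
  rcases h with rfl | rfl
  · simp [shuffleSum, shuffles_eq_singleton_one, twoZeta]
  · simp [shuffleSum, shuffles_eq_singleton_one, twoZeta, fun l : Fin r => l.is_lt.not_ge]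

lemma shMulWord_nil_left (b : List I) : shMulWord B u [] b = Finsupp.single b 1 := by
  rw [shMulWord_eq_shuffleSum B u (List.ofFn_get b),
    List.length_nil, shuffleSum_of_trivial_block B u (Or.inl rfl), List.ofFn_get]

lemma shMulWord_nil_right (a : List I) : shMulWord B u a [] = Finsupp.single a 1 := by
  rw [shMulWord_eq_shuffleSum B u ((List.ofFn_get a).trans (List.append_nil a).symm),
    shuffleSum_of_trivial_block B u (Or.inr rfl), List.ofFn_get]

lemma val_zpow_mul_val_zpow (a b : ℤ) :
    ((u ^ a : Rˣ) : R) * ((u ^ b : Rˣ) : R) = ((u ^ (a + b) : Rˣ) : R) := by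
  rw [← Units.val_mul, ← zpow_add]

lemma shuffleSum_succ {m p : ℕ} (hp : p < m) (t : Fin (m + 1)) (ht : (t : ℕ) = p)
    (f : Fin (m + 1) → I) :
    shuffleSum B u (m + 1) (p + 1) f
      = ((u ^ ∑ l : Fin (m + 1), (if p + 1 ≤ (l : ℕ) then B (f t) (f l) else 0)
            : Rˣ) : R) •
          (shuffleSum B u m p fun y => f (t.succAbove y)).mapDomain (· ++ [f t])
        + ((u ^ (-∑ k : Fin (m + 1), (if (k : ℕ) < p + 1 then B (f k) (f (Fin.last m)) else 0))
            : Rˣ) : R) •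
          (shuffleSum B u m (p + 1) fun y => f y.castSucc).mapDomain (· ++ [f (Fin.last m)]) := by
  unfold shuffleSum
  rw [sum_shuffles_succ hp ht]
  congr 1 <;>
    rw [Finsupp.mapDomain_finsetSum, smul_sum] <;>
    refine sum_congr rfl fun σ _ => ?_ <;>
    rw [Finsupp.mapDomain_single, Finsupp.smul_single, smul_eq_mul, val_zpow_mul_val_zpow,
      List.ofFn_succ']
  · rw [twoZeta_succAbovePerm B (r' := p) (fun y => val_succAbove_lt_succ_iff ht)]
    simp [ht, Function.comp_def, add_comm]
  · rw [twoZeta_succAbovePerm B (r' := p + 1) (fun y => by simp)]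
    simp [hp, hp.not_ge, Function.comp_def, sub_eq_add_neg, add_comm]

lemma shMulWord_append_singleton_append_singleton (a b : List I) (x y : I) :
    shMulWord B u (a ++ [x]) (b ++ [y])
      = ((u ^ pairWt B [x] (b ++ [y]) : Rˣ) : R) •
          (shMulWord B u a (b ++ [y])).mapDomain (· ++ [x])
        + ((u ^ (-pairWt B (a ++ [x]) [y]) : Rˣ) : R) •
          (shMulWord B u (a ++ [x]) b).mapDomain (· ++ [y]) := by
  set f : Fin ((a ++ [x] ++ b).length + 1) → I :=
    fun k => (a ++ [x] ++ (b ++ [y]))[(k : ℕ)]'(by have := k.is_lt; simp at this ⊢; omega)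
  have hf : List.ofFn f = a ++ [x] ++ (b ++ [y]) :=
    List.ext_getElem (by simp; omega) fun k _ _ => by simp [f, -List.ofFn_succ]
  have hp : a.length < (a ++ [x] ++ b).length := by simp
  set t : Fin ((a ++ [x] ++ b).length + 1) := ⟨a.length, by omega⟩
  have hft : f t = x := by simp [f, t]
  have hlast : f (Fin.last _) = y := by simp [f]
  have hsucc : List.ofFn (fun k => f (t.succAbove k)) = a ++ (b ++ [y]) := by
    rw [List.ofFn_comp_succAbove, hf]
    simp [t, List.eraseIdx_append_of_length_le]
  have hcast : List.ofFn (fun k => f k.castSucc) = a ++ [x] ++ b := by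
    rw [← List.dropLast_concat (l₁ := List.ofFn _) (b := f (Fin.last _)),
      ← List.concat_eq_append, ← List.ofFn_succ', hf, ← List.append_assoc,
      List.dropLast_concat]
  have hcast' := shMulWord_eq_shuffleSum B u hcast
  have hsumx := sum_ite_length_le_of_ofFn_eq_append hf (B x)
  have hsumy := sum_ite_lt_length_of_ofFn_eq_append hf (B · y)
  simp only [List.length_append, List.length_singleton] at hcast' hsumx hsumy
  rw [shMulWord_eq_shuffleSum B u hf, show (a ++ [x]).length = a.length + 1 by simp,
    shuffleSum_succ B u hp t rfl f, ← shMulWord_eq_shuffleSum B u hsucc, ← hcast', hft, hlast,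
    hsumx, hsumy]
  simp [pairWt]

lemma shMul_single_single (a b : List I) (c d : R) :
    shMul B u (Finsupp.single a c) (Finsupp.single b d) = (c * d) • shMulWord B u a b := by
  simp [shMul]

lemma shMul_zero_left (y : List I →₀ R) : shMul B u 0 y = 0 := by
  simp [shMul]

lemma shMul_zero_right (x : List I →₀ R) : shMul B u x 0 = 0 := by
  simp [shMul]

lemma shMul_single_nil_left (z : List I →₀ R) : shMul B u (Finsupp.single [] 1) z = z := by
  simp [shMul, shMulWord_nil_left]

lemma shMul_single_nil_right (z : List I →₀ R) : shMul B u z (Finsupp.single [] 1) = z := by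
  simp [shMul, shMulWord_nil_right]

lemma pairWt_append_left (a b c : List I) :
    pairWt B (a ++ b) c = pairWt B a c + pairWt B b c := by
  simp [pairWt]

lemma pairWt_comm (hB : ∀ i j, B i j = B j i) (a b : List I) : pairWt B a b = pairWt B b a := by
  have := Multiset.sum_map_sum_map (a : Multiset I) (b : Multiset I) (f := B)
  simp only [Multiset.map_coe, Multiset.sum_coe] at this
  simpa [pairWt, hB _ _] using this

lemma pairWt_eq_of_perm {a b : List I} (h : a.Perm b) (c : List I) :
    pairWt B a c = pairWt B b c :=
  (h.map _).sum_eq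

/-- Every word occurring in `a ∘ b` is a rearrangement of `a ++ b`. -/
lemma pairWt_eq_of_mem_support_shMulWord {a b w : List I}
    (hw : w ∈ (shMulWord B u a b).support) (c : List I) :
    pairWt B w c = pairWt B (a ++ b) c := by
  classical
  obtain ⟨σ, -, hσ⟩ := mem_biUnion.1 (Finsupp.support_finsetSum hw)
  rw [Finset.mem_singleton.1 (Finsupp.support_single_subset hσ)]
  have hperm := Equiv.Perm.ofFn_comp_perm σ (a ++ b).get
  rw [List.ofFn_get] at hperm
  exact pairWt_eq_of_perm B hperm c

end ShuffleProduct

section Theta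

variable {I R : Type*} [CommRing R] (B : I → I → ℤ) (u : Rˣ) (i : I)

lemma theta_eq_linearCombination :
    theta B u i = Finsupp.linearCombination R (thetaWord B u i) :=
  funext fun x => (Finsupp.linearCombination_apply R x).symm

lemma theta_single (w : List I) (c : R) :
    theta B u i (Finsupp.single w c) = c • thetaWord B u i w := by
  rw [theta_eq_linearCombination, Finsupp.linearCombination_single]

lemma theta_add (x y : List I →₀ R) : theta B u i (x + y) = theta B u i x + theta B u i y := by
  rw [theta_eq_linearCombination, map_add]

lemma theta_smul (c : R) (x : List I →₀ R) : theta B u i (c • x) = c • theta B u i x := by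
  rw [theta_eq_linearCombination, map_smul]

lemma thetaWord_nil : thetaWord B u i [] = (0 : List I →₀ R) := by
  simp [thetaWord]

lemma thetaWord_append_singleton_self (w : List I) :
    thetaWord B u i (w ++ [i]) = Finsupp.single w ((u ^ pairWt B w [i] : Rˣ) : R) := by
  simp [thetaWord]

lemma thetaWord_append_singleton_of_ne {x : I} (hx : x ≠ i) (w : List I) :
    thetaWord B u i (w ++ [x]) = (0 : List I →₀ R) := by
  simp [thetaWord, hx]

lemma theta_mapDomain_append_singleton_self {z : List I →₀ R} {C : ℤ}
    (hz : ∀ w ∈ z.support, pairWt B w [i] = C) :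
    theta B u i (z.mapDomain (· ++ [i])) = ((u ^ C : Rˣ) : R) • z := by
  rw [theta_eq_linearCombination, Finsupp.linearCombination_mapDomain,
    Finsupp.linearCombination_apply]
  conv_rhs => rw [← Finsupp.sum_single z, Finsupp.smul_sum]
  refine Finsupp.sum_congr fun w hw => ?_
  simp [thetaWord_append_singleton_self, hz w hw, mul_comm]

lemma theta_mapDomain_append_singleton_of_ne {x : I} (hx : x ≠ i) (z : List I →₀ R) :
    theta B u i (z.mapDomain (· ++ [x])) = 0 := by
  have hzero : thetaWord B u i ∘ (· ++ [x]) = 0 :=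
    funext (thetaWord_append_singleton_of_ne B u i hx)
  rw [theta_eq_linearCombination, Finsupp.linearCombination_mapDomain, hzero,
    Finsupp.linearCombination_zero_apply]

lemma theta_smul_mapDomain_append_shMulWord_left (hB : ∀ i j, B i j = B j i) (a b : List I)
    (x : I) :
    theta B u i (((u ^ pairWt B [x] b : Rˣ) : R) • (shMulWord B u a b).mapDomain (· ++ [x]))
      = ((u ^ (2 * pairWt B [i] b) : Rˣ) : R) •
          shMul B u (thetaWord B u i (a ++ [x])) (Finsupp.single b 1) := by
  rw [theta_smul]
  by_cases hx : x = i
  · subst hx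
    rw [theta_mapDomain_append_singleton_self B u x
        (fun w hw => pairWt_eq_of_mem_support_shMulWord B u hw [x]),
      thetaWord_append_singleton_self, shMul_single_single, smul_smul, smul_smul, mul_one,
      val_zpow_mul_val_zpow, val_zpow_mul_val_zpow, pairWt_append_left, pairWt_comm B hB b]
    ring_nf
  · rw [theta_mapDomain_append_singleton_of_ne B u i hx,
      thetaWord_append_singleton_of_ne B u i hx, shMul_zero_left, smul_zero, smul_zero]

lemma theta_smul_mapDomain_append_shMulWord_right (a b : List I) (x : I) :
    theta B u i (((u ^ (-pairWt B a [x]) : Rˣ) : R) • (shMulWord B u a b).mapDomain (· ++ [x]))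
      = shMul B u (Finsupp.single a 1) (thetaWord B u i (b ++ [x])) := by
  rw [theta_smul]
  by_cases hx : x = i
  · subst hx
    rw [theta_mapDomain_append_singleton_self B u x
        (fun w hw => pairWt_eq_of_mem_support_shMulWord B u hw [x]),
      thetaWord_append_singleton_self, shMul_single_single, smul_smul, one_mul,
      val_zpow_mul_val_zpow, pairWt_append_left]
    ring_nf
  · rw [theta_mapDomain_append_singleton_of_ne B u i hx,
      thetaWord_append_singleton_of_ne B u i hx, shMul_zero_right, smul_zero]

end Theta

/-- `θ_i` is a twisted derivation with respect to the shuffle product: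
`θ_i(𝐣₁ ∘ 𝐣₂) = v^{(α_i,|𝐣₂|)} θ_i(𝐣₁) ∘ 𝐣₂ + 𝐣₁ ∘ θ_i(𝐣₂)`. -/
theorem theta_twisted_derivation {I : Type*} {R : Type*} [CommRing R] (B : I → I → ℤ)
    (hB : ∀ i j, B i j = B j i) (u : Rˣ) (i : I) (j1 j2 : List I) :
    theta B u i (shMulWord B u j1 j2)
      = ((u ^ (2 * pairWt B [i] j2) : Rˣ) : R) •
          shMul B u (thetaWord B u i j1) (Finsupp.single j2 (1 : R))
        + shMul B u (Finsupp.single j1 (1 : R)) (thetaWord B u i j2) := by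
  rcases List.eq_nil_or_concat' j1 with rfl | ⟨a, x, rfl⟩
  · rw [shMulWord_nil_left, theta_single, one_smul, thetaWord_nil, shMul_zero_left, smul_zero,
      zero_add, shMul_single_nil_left]
  rcases List.eq_nil_or_concat' j2 with rfl | ⟨b, y, rfl⟩
  · rw [shMulWord_nil_right, theta_single, one_smul, thetaWord_nil, shMul_zero_right, add_zero,
      shMul_single_nil_right]
    simp [pairWt]
  rw [shMulWord_append_singleton_append_singleton, theta_add,
    theta_smul_mapDomain_append_shMulWord_left B u i hB,
    theta_smul_mapDomain_append_shMulWord_right]
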